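/- (Mixed-invariance B-identity at a transformed point) Let γ be a Möbius transformation, q with (q∘γ)(γ')² = q, F with (F∘γ)/γ' = F − φ for some function φ, and G with (G∘γ)/γ' = G − ψ. Then B_q[F,G]∘γ = B_q[F−φ, G−ψ], and consequently B_q[F,G](γz₀) = B_q[F, G − ψ](z₀) − B_q[φ, G − ψ](z₀). -/

import Mathlib

lemma deriv_entire {f : ℂ → ℂ} (hf : Differentiable ℂ f) : Differentiable ℂ (deriv f) :=
  ((contDiff_infty_iff_deriv.mp hf.contDiff).2).differentiable (by simp)

lemma mob_hasDerivAt (a b c d : ℂ) (habcd : a * d - b * c = 1) (γ : ℂ → ℂ)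
    (hγ : γ = fun z => (a * z + b) / (c * z + d)) (w : ℂ) (hw : c * w + d ≠ 0) :
    HasDerivAt γ (((c*w+d)^2)⁻¹) w := by
  have h1 : HasDerivAt (fun z => a * z + b) a w := by
    simpa using ((hasDerivAt_id w).const_mul a).add_const b
  have h2 : HasDerivAt (fun z => c * z + d) c w := by
    simpa using ((hasDerivAt_id w).const_mul c).add_const d
  have h3 := h1.div h2 hw
  have hnum : a * (c * w + d) - (a * w + b) * c = 1 := by linear_combination habcd
  rw [hnum, one_div] at h3
  rw [hγ]; exact h3

lemma key_facts (a b c d : ℂ) (habcd : a * d - b * c = 1) (F φ : ℂ → ℂ)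
    (hF : Differentiable ℂ F) (γ : ℂ → ℂ)
    (hγ : γ = fun z => (a * z + b) / (c * z + d))
    (hFtr : ∀ z, c * z + d ≠ 0 → F (γ z) / deriv γ z = F z - φ z)
    (z : ℂ) (hz : c * z + d ≠ 0) :
    F z - φ z = F (γ z) * (c * z + d) ^ 2 ∧
    deriv (fun w => F w - φ w) z = deriv F (γ z) + 2 * c * ((c * z + d) * F (γ z)) ∧
    deriv (deriv (fun w => F w - φ w)) z
      = deriv (deriv F) (γ z) / (c * z + d) ^ 2 + 2 * c ^ 2 * F (γ z)
        + 2 * c * deriv F (γ z) / (c * z + d) := by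
  set S : Set ℂ := {w | c * w + d ≠ 0} with hSdef
  have hS : IsOpen S := by
    have : S = (fun w => c * w + d) ⁻¹' {(0:ℂ)}ᶜ := rfl
    rw [this]
    exact (isOpen_compl_singleton).preimage (by fun_prop)
  have hγd : ∀ w ∈ S, HasDerivAt γ (((c*w+d)^2)⁻¹) w := fun w hw =>
    mob_hasDerivAt a b c d habcd γ hγ w hw
  have hdγ : ∀ w ∈ S, deriv γ w = ((c*w+d)^2)⁻¹ := fun w hw => (hγd w hw).deriv
  -- function equality on S
  have hFφ : ∀ w ∈ S, F w - φ w = F (γ w) * (c * w + d) ^ 2 := by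
    intro w hw
    have h := hFtr w hw
    rw [hdγ w hw] at h
    rw [← h, div_inv_eq_mul]
  -- derivative of F(γ w) * u^2 on S
  have hFγd : ∀ w ∈ S, HasDerivAt (fun w => F (γ w) * (c * w + d) ^ 2)
      (deriv F (γ w) + 2 * c * ((c * w + d) * F (γ w))) w := by
    intro w hw
    have hc : HasDerivAt (fun w => F (γ w)) (deriv F (γ w) * ((c*w+d)^2)⁻¹) w :=
      (hF (γ w)).hasDerivAt.comp w (hγd w hw)
    have hu : HasDerivAt (fun w : ℂ => c * w + d) c w := by
      simpa using ((hasDerivAt_id w).const_mul c).add_const d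
    have hu2 : HasDerivAt (fun w => (c * w + d) ^ 2) (2 * (c*w+d) ^ 1 * c) w := by
      simpa using (show HasDerivAt (fun w => (c * w + d) ^ 2) _ w from hu.pow 2)
    have := (show HasDerivAt (fun w => F (γ w) * (c * w + d) ^ 2) _ w from hc.mul hu2)
    convert this using 1
    have hw' : (c * w + d) ≠ 0 := hw
    field_simp
  -- first derivative of F - φ on S
  have hd1 : ∀ w ∈ S, deriv (fun w => F w - φ w) w
      = deriv F (γ w) + 2 * c * ((c * w + d) * F (γ w)) := by
    intro w hw
    have hev : (fun w => F w - φ w) =ᶠ[nhds w] (fun w => F (γ w) * (c * w + d) ^ 2) :=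
      Filter.eventuallyEq_of_mem (hS.mem_nhds hw) hFφ
    rw [hev.deriv_eq, (hFγd w hw).deriv]
  refine ⟨hFφ z hz, hd1 z hz, ?_⟩
  -- second derivative
  have hev2 : deriv (fun w => F w - φ w)
      =ᶠ[nhds z] (fun w => deriv F (γ w) + 2 * c * ((c * w + d) * F (γ w))) :=
    Filter.eventuallyEq_of_mem (hS.mem_nhds hz) hd1
  rw [hev2.deriv_eq]
  have hc2 : HasDerivAt (fun w => deriv F (γ w)) (deriv (deriv F) (γ z) * ((c*z+d)^2)⁻¹) z :=
    ((deriv_entire hF) (γ z)).hasDerivAt.comp z (hγd z hz)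
  have hu : HasDerivAt (fun w : ℂ => c * w + d) c z := by
    simpa using ((hasDerivAt_id z).const_mul c).add_const d
  have hc : HasDerivAt (fun w => F (γ w)) (deriv F (γ z) * ((c*z+d)^2)⁻¹) z :=
    (hF (γ z)).hasDerivAt.comp z (hγd z hz)
  have h2 := hc2.add (((hu.mul hc).const_mul (2 * c)))
  rw [(show HasDerivAt (fun w => deriv F (γ w) + 2 * c * ((c * w + d) * F (γ w))) _ z from h2).deriv]
  have hz' : (c * z + d) ≠ 0 := hz
  field_simp
  ring

/-- The bilinear form `B_q[F,G] = F''G + FG'' − F'G' + 2qFG`. -/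
noncomputable def Bform (q F G : ℂ → ℂ) (z : ℂ) : ℂ :=
  deriv (deriv F) z * G z + F z * deriv (deriv G) z
    - deriv F z * deriv G z + 2 * q z * F z * G z

/-- Mixed-invariance `B`-identity at a transformed point: if `(F∘γ)/γ' = F − φ`
and `(G∘γ)/γ' = G − ψ` under a Möbius transformation `γ` with weight-4 `q`, then
`B_q[F,G]∘γ = B_q[F−φ, G−ψ]`, and
`B_q[F,G](γz₀) = B_q[F, G−ψ](z₀) − B_q[φ, G−ψ](z₀)`. -/
theorem Bform_mixed_invariance (a b c d : ℂ) (habcd : a * d - b * c = 1)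
    (q F G φ ψ : ℂ → ℂ) (hq : Differentiable ℂ q)
    (hF : Differentiable ℂ F) (hG : Differentiable ℂ G)
    (hφ : Differentiable ℂ φ) (hψ : Differentiable ℂ ψ)
    (γ : ℂ → ℂ) (hγ : γ = fun z => (a * z + b) / (c * z + d))
    (hq4 : ∀ z, c * z + d ≠ 0 → q (γ z) * (deriv γ z) ^ 2 = q z)
    (hFtr : ∀ z, c * z + d ≠ 0 → F (γ z) / deriv γ z = F z - φ z)
    (hGtr : ∀ z, c * z + d ≠ 0 → G (γ z) / deriv γ z = G z - ψ z) :
    (∀ z, c * z + d ≠ 0 →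
      Bform q F G (γ z)
        = Bform q (fun w => F w - φ w) (fun w => G w - ψ w) z) ∧
    (∀ z₀, c * z₀ + d ≠ 0 →
      Bform q F G (γ z₀)
        = Bform q F (fun w => G w - ψ w) z₀
          - Bform q φ (fun w => G w - ψ w) z₀) := by
  have main1 : ∀ z, c * z + d ≠ 0 →
      Bform q F G (γ z)
        = Bform q (fun w => F w - φ w) (fun w => G w - ψ w) z := by
    intro z hz
    obtain ⟨hF0, hF1, hF2⟩ := key_facts a b c d habcd F φ hF γ hγ hFtr z hz
    obtain ⟨hG0, hG1, hG2⟩ := key_facts a b c d habcd G ψ hG γ hγ hGtr z hz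
    have hdγ : deriv γ z = ((c*z+d)^2)⁻¹ := (mob_hasDerivAt a b c d habcd γ hγ z hz).deriv
    have hqz : q (γ z) = q z * (c * z + d) ^ 4 := by
      have h := hq4 z hz
      rw [hdγ] at h
      field_simp at h
      linear_combination h
    simp only [Bform]
    rw [hF2, hG2, hF1, hG1, hF0, hG0, hqz]
    field_simp
    ring
  refine ⟨main1, fun z₀ hz₀ => ?_⟩
  rw [main1 z₀ hz₀]
  have hsub : deriv (fun w => F w - φ w) = fun w => deriv F w - deriv φ w :=
    funext fun w => deriv_sub (hF w) (hφ w)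
  have h2 : deriv (deriv (fun w => F w - φ w)) z₀
      = deriv (deriv F) z₀ - deriv (deriv φ) z₀ := by
    rw [hsub]
    exact deriv_sub ((deriv_entire hF) z₀) ((deriv_entire hφ) z₀)
  have h1 : deriv (fun w => F w - φ w) z₀ = deriv F z₀ - deriv φ z₀ := by rw [hsub]
  simp only [Bform, h2, h1]
  ring
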